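/- A graph G=(V,E) is prison-free if and only if the following holds: for every inclusion-wise maximal set F⊆V such that the induced subgraph G[F] is complete multipartite with at least 4 classes, and for every vertex v∈V∖F, the neighborhood N(v) intersects at most one class of F. -/

import Mathlib

namespace PrisonFreePaper

variable {V : Type*}

/-- The prison graph on 5 vertices: `K₅` minus the two edges `{4,2}` and `{4,3}`
(which share the vertex `4`).  Thus `{0,1,2,3}` is a 4-clique and the vertex `4`
is adjacent exactly to `0` and `1`. -/
def prison : SimpleGraph (Fin 5) where
  Adj a b := a ≠ b ∧ ¬((a = 4 ∧ (b = 2 ∨ b = 3)) ∨ (b = 4 ∧ (a = 2 ∨ a = 3)))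
  symm := by
    constructor
    rintro a b ⟨h1, h2⟩
    exact ⟨h1.symm, by tauto⟩
  loopless := by
    constructor
    rintro a ⟨h, _⟩
    exact h rfl

/-- `P` is a 5-vertex set inducing a subgraph of `G` isomorphic to the prison. -/
def InducesPrison (G : SimpleGraph V) (P : Set V) : Prop :=
  ∃ f : Fin 5 ↪ V, Set.range f = P ∧ ∀ a b, G.Adj (f a) (f b) ↔ prison.Adj a b

/-- `G` is prison-free: no 5-vertex set induces a prison. -/
def PrisonFree (G : SimpleGraph V) : Prop :=
  ¬ ∃ P : Set V, InducesPrison G P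

/-- `P` is the set of classes witnessing that the induced subgraph `G[F]` is
complete multipartite: the classes are nonempty, pairwise disjoint, their union
is `F`, and two vertices of `F` are adjacent iff they lie in different classes. -/
def IsCMP (G : SimpleGraph V) (F : Set V) (P : Set (Set V)) : Prop :=
  (∀ C ∈ P, C.Nonempty ∧ C ⊆ F) ∧
  (⋃₀ P = F) ∧
  (∀ C ∈ P, ∀ D ∈ P, C ≠ D → Disjoint C D) ∧
  (∀ u ∈ F, ∀ v ∈ F, (G.Adj u v ↔ ¬ ∃ C ∈ P, u ∈ C ∧ v ∈ C))

/-- The induced subgraph `G[F]` is complete multipartite. -/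
def CMP (G : SimpleGraph V) (F : Set V) : Prop := ∃ P, IsCMP G F P

/-- The induced subgraph `G[F]` is complete multipartite with at least `p` classes. -/
def CMPAtLeast (G : SimpleGraph V) (F : Set V) (p : ℕ) : Prop :=
  ∃ P, IsCMP G F P ∧ ∃ f : Fin p ↪ Set V, ∀ i, f i ∈ P

/-- `F ∈ cmd_p` of the induced subgraph of `G` on the ground set `W`:
`F` is an inclusion-wise maximal subset of `W` inducing a complete multipartite
graph with at least `p` classes. -/
def Cmd (G : SimpleGraph V) (W : Set V) (p : ℕ) (F : Set V) : Prop :=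
  F ⊆ W ∧ CMPAtLeast G F p ∧
    ∀ F', F' ⊆ W → F ⊆ F' → CMPAtLeast G F' p → F' = F

/-- The neighbourhood of `v` in `G` intersects at most one class of `P`. -/
def MeetsAtMostOneClass (G : SimpleGraph V) (P : Set (Set V)) (v : V) : Prop :=
  ∀ C ∈ P, ∀ D ∈ P, (∃ x ∈ C, G.Adj v x) → (∃ y ∈ D, G.Adj v y) → C = D

/-- The induced subgraph `G[X]`, viewed as a graph on the same vertex set
(only edges with both endpoints in `X` are kept). -/
def inducedOn (G : SimpleGraph V) (X : Set V) : SimpleGraph V where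
  Adj a b := G.Adj a b ∧ a ∈ X ∧ b ∈ X
  symm := by constructor; rintro a b ⟨h, ha, hb⟩; exact ⟨h.symm, hb, ha⟩
  loopless := by constructor; rintro a ⟨h, _⟩; exact h.ne rfl

/-- The set of edges of `G` with both endpoints in `X`, i.e. the edges of `G[X]`. -/
def edgesWithin (G : SimpleGraph V) (X : Set V) : Set (Sym2 V) :=
  (inducedOn G X).edgeSet

/-- `(G,k)` is a yes-instance of Prison-Free Edge Deletion. -/
def DeletionYes (G : SimpleGraph V) (k : ℕ) : Prop :=
  ∃ A : Set (Sym2 V), A ⊆ G.edgeSet ∧ A.Finite ∧ A.ncard ≤ k ∧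
    PrisonFree (G.deleteEdges A)

/-- `P` is a strict supergraph of a prison in `G`: a 5-vertex set whose induced
subgraph is `K₅` or `K₅` minus one edge (at most one non-adjacent pair). -/
def StrictSupPrison (G : SimpleGraph V) (P : Set V) : Prop :=
  P.ncard = 5 ∧ ∃ u v : V, ∀ x ∈ P, ∀ y ∈ P, x ≠ y → ¬ G.Adj x y →
    (x = u ∧ y = v) ∨ (x = v ∧ y = u)

/-- `P` is a supergraph of a prison in `G`: a 5-vertex set whose induced subgraph
contains a prison on `P` as a spanning subgraph, i.e. all non-adjacent pairs in `P`
are among two pairs sharing a common vertex. -/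
def SupPrison (G : SimpleGraph V) (P : Set V) : Prop :=
  P.ncard = 5 ∧ ∃ w u v : V, ∀ x ∈ P, ∀ y ∈ P, x ≠ y → ¬ G.Adj x y →
    (({x, y} : Set V) = {w, u} ∨ ({x, y} : Set V) = {w, v})

/-- Hypothesis (H1): every edge of `G` that does not have both endpoints in `S`
is contained in a strict supergraph of a prison in `G`. -/
def H1 (G : SimpleGraph V) (S : Set V) : Prop :=
  ∀ u v : V, G.Adj u v → ¬(u ∈ S ∧ v ∈ S) →
    ∃ P, StrictSupPrison G P ∧ u ∈ P ∧ v ∈ P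

/-- Hypothesis (H2): every 5-vertex set inducing a prison in `G` contains at least
two edges with both endpoints in `S`. -/
def H2 (G : SimpleGraph V) (S : Set V) : Prop :=
  ∀ P, InducesPrison G P →
    ∃ e₁ e₂ : Sym2 V, e₁ ≠ e₂ ∧ e₁ ∈ edgesWithin G (P ∩ S) ∧ e₂ ∈ edgesWithin G (P ∩ S)

/-- `B`: the edges of `G−S` lying in no triangle of `G−S`. -/
def BSet (G : SimpleGraph V) (S : Set V) : Set (Sym2 V) :=
  {e ∈ edgesWithin G Sᶜ | ¬ ∃ w ∈ Sᶜ, ∀ x ∈ e, G.Adj w x}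

/-- `B_e` for the edge `e = ab` of `G[S]`: the edges of `B` both of whose endpoints
are adjacent in `G` to both `a` and `b`. -/
def BOf (G : SimpleGraph V) (S : Set V) (a b : V) : Set (Sym2 V) :=
  {f ∈ BSet G S | ∀ x ∈ f, G.Adj x a ∧ G.Adj x b}

/-- `V(B_e)`: the set of endpoints of the edges of `B_e`. -/
def BVerts (G : SimpleGraph V) (S : Set V) (a b : V) : Set V :=
  {x | ∃ f ∈ BOf G S a b, x ∈ f}

/-- The graph `G ∪ A` obtained by adding the pairs in `A` as edges. -/
def addEdges (G : SimpleGraph V) (A : Set (Sym2 V)) : SimpleGraph V :=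
  G ⊔ SimpleGraph.fromEdgeSet A

/-- `A` is a prison-free completion set for `G`: a set of non-edges (unordered
pairs of distinct vertices not adjacent in `G`) whose addition makes `G` prison-free. -/
def CompletionSet (G : SimpleGraph V) (A : Set (Sym2 V)) : Prop :=
  (∀ e ∈ A, ¬ e.IsDiag) ∧ (∀ e ∈ A, e ∉ G.edgeSet) ∧ PrisonFree (addEdges G A)

/-- `A` is a minimal prison-free completion set for `G`. -/
def MinCompletionSet (G : SimpleGraph V) (A : Set (Sym2 V)) : Prop :=
  CompletionSet G A ∧ ∀ A' ⊂ A, ¬ CompletionSet G A'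

/-- `A` is a solution to the instance `(G,k)` of Prison-Free Edge Completion:
a prison-free completion set of size at most `k`. -/
def Solution (G : SimpleGraph V) (k : ℕ) (A : Set (Sym2 V)) : Prop :=
  CompletionSet G A ∧ A.Finite ∧ A.ncard ≤ k

/-- `A` is a minimal solution to `(G,k)`: a solution no proper subset of which is a
prison-free completion set. -/
def MinSolution (G : SimpleGraph V) (k : ℕ) (A : Set (Sym2 V)) : Prop :=
  Solution G k A ∧ ∀ A' ⊂ A, ¬ CompletionSet G A'

/-- `K` is a set of 4 vertices inducing a complete graph `K₄` in `G`. -/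
def IsK4 (G : SimpleGraph V) (K : Set V) : Prop :=
  K.ncard = 4 ∧ ∀ u ∈ K, ∀ v ∈ K, u ≠ v → G.Adj u v

/-- The modulator property of the set `S` (output of the sunflower-based
Lemma): for every prison `P` in `G` and every edge set `A ⊆ E(G)` with `|A| ≤ k`,
if deleting `A` from `G[S]` yields a prison-free graph then `A` contains an edge
of `G[P]`. -/
def GoodModulator (G : SimpleGraph V) (k : ℕ) (S : Set V) : Prop :=
  ∀ P : Set V, InducesPrison G P →
    ∀ A : Set (Sym2 V), A ⊆ G.edgeSet → A.Finite → A.ncard ≤ k →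
      PrisonFree ((inducedOn G S).deleteEdges A) →
      ∃ e ∈ A, e ∈ edgesWithin G P

/-- Hypothesis (H3): for every `F' ∈ cmd₃(G−S)` and every inclusion-wise maximal
set `F ⊇ F'` such that `G[F]` is complete multipartite, some vertex outside `F`
has neighbours in at least two classes of `F`. -/
def H3 (G : SimpleGraph V) (S : Set V) : Prop :=
  ∀ F', Cmd G Sᶜ 3 F' → ∀ F : Set V, F' ⊆ F → CMP G F →
    (∀ F'', F ⊆ F'' → CMP G F'' → F'' = F) →
    ∃ v ∉ F, ∃ P, IsCMP G F P ∧
      ∃ C ∈ P, ∃ D ∈ P, C ≠ D ∧ (∃ x ∈ C, G.Adj v x) ∧ ∃ y ∈ D, G.Adj v y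

/-- `F` is an inclusion-wise maximal subset of `W` inducing a complete
multipartite subgraph of `G`. -/
def MaxCMPon (G : SimpleGraph V) (W F : Set V) : Prop :=
  F ⊆ W ∧ CMP G F ∧ ∀ F'', F'' ⊆ W → F ⊆ F'' → CMP G F'' → F'' = F

/-!
A set `F` induces a complete multipartite graph exactly when non-adjacency is transitive on `F`,
and then the number of classes is the clique number of `G[F]`. If a vertex `v ∉ F` had
neighbours in two classes of a maximal `F` with at least four classes, avoiding prisons forces
the non-neighbours of `v` in `F` to be empty or a single class, so non-adjacency stays transitive
on `F ∪ {v}`, contradicting maximality. Conversely, the 4-clique of a prison extends to such a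
maximal `F`; the fifth vertex either lies in `F`, where its two non-neighbours would have to be
non-adjacent, or lies outside and sees two adjacent vertices, hence two classes, of `F`.
-/

instance : DecidableRel prison.Adj := fun _ _ => inferInstanceAs (Decidable (_ ∧ _))

section
variable {G : SimpleGraph V}

theorem not_prisonFree_of_adj {a b c d v : V}
    (hab : G.Adj a b) (hac : G.Adj a c) (had : G.Adj a d) (hbc : G.Adj b c)
    (hbd : G.Adj b d) (hcd : G.Adj c d)
    (hva : G.Adj v a) (hvb : G.Adj v b) (hvc : ¬ G.Adj v c) (hvd : ¬ G.Adj v d) :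
    ¬ PrisonFree G := by
  have hvc' : v ≠ c := by rintro rfl; exact hvd hcd
  have hvd' : v ≠ d := by rintro rfl; exact hvc hcd.symm
  have hinj : Function.Injective ![a, b, c, d, v] := by
    intro i j hij
    fin_cases i <;> fin_cases j <;> simp_all [G.adj_comm]
  refine not_not.2 ⟨_, ⟨⟨![a, b, c, d, v], hinj⟩, rfl, fun i j => ?_⟩⟩
  fin_cases i <;> fin_cases j <;> simp_all [prison, G.adj_comm]

theorem cmpAtLeast_of_nonAdj_trans {F : Set V} {p : ℕ}
    (htrans : ∀ u ∈ F, ∀ w ∈ F, ∀ x ∈ F, ¬ G.Adj u w → ¬ G.Adj w x → ¬ G.Adj u x)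
    (k : Fin p → V) (hkF : ∀ i, k i ∈ F) (hk : Pairwise fun i j => G.Adj (k i) (k j)) :
    CMPAtLeast G F p := by
  set cls : V → Set V := fun u => {w ∈ F | ¬ G.Adj u w}
  have cls_eq {u w : V} (hu : u ∈ F) (hw : w ∈ F) (huw : ¬ G.Adj u w) : cls u = cls w := by
    ext x
    refine ⟨fun ⟨hx, hux⟩ => ⟨hx, htrans w hw u hu x hx (by rwa [G.adj_comm]) hux⟩,
      fun ⟨hx, hwx⟩ => ⟨hx, htrans u hu w hw x hx huw hwx⟩⟩
  refine ⟨cls '' F, ⟨?_, ?_, ?_, ?_⟩, ⟨fun i => cls (k i), fun i j hij => ?_⟩,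
    fun i => ⟨k i, hkF i, rfl⟩⟩
  · rintro _ ⟨u, hu, rfl⟩
    exact ⟨⟨u, hu, G.irrefl⟩, fun _ hw => hw.1⟩
  · ext u
    exact ⟨fun ⟨_, ⟨w, _, rfl⟩, hu⟩ => hu.1,
      fun hu => ⟨cls u, ⟨u, hu, rfl⟩, hu, G.irrefl⟩⟩
  · rintro _ ⟨u, hu, rfl⟩ _ ⟨w, hw, rfl⟩ hne
    refine Set.disjoint_left.2 fun x hxu hxw => hne ?_
    exact (cls_eq hu hxu.1 hxu.2).trans (cls_eq hw hxw.1 hxw.2).symm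
  · intro u hu w hw
    refine ⟨fun huw ⟨_, ⟨x, hx, rfl⟩, hxu, hxw⟩ => ?_, fun h => ?_⟩
    · exact htrans u hu x hx w hw (by rw [G.adj_comm]; exact hxu.2) hxw.2 huw
    · by_contra huw
      exact h ⟨cls u, ⟨u, hu, rfl⟩, ⟨hu, G.irrefl⟩, ⟨hw, huw⟩⟩
  · by_contra hne
    have hkj : k j ∈ cls (k i) := by
      rw [show cls (k i) = cls (k j) from hij]
      exact ⟨hkF j, G.irrefl⟩
    exact hkj.2 (hk hne)

theorem exists_cmd_superset [Finite V] {K W : Set V} {p : ℕ} (hK : CMPAtLeast G K p)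
    (hKW : K ⊆ W) : ∃ F, K ⊆ F ∧ Cmd G W p F := by
  obtain ⟨F, hKF, hF⟩ :=
    Finite.exists_le_maximal (p := fun F => F ⊆ W ∧ CMPAtLeast G F p) ⟨hKW, hK⟩
  exact ⟨F, hKF, hF.1.1, hF.1.2, fun F' hF'W hFF' hF' => hF.eq_of_ge ⟨hF'W, hF'⟩ hFF'⟩

end

theorem exists_mem_ne_of_embedding {α : Type*} {P : Set α} (f : Fin 4 ↪ α)
    (hf : ∀ i, f i ∈ P) (a b c : α) : ∃ e ∈ P, e ≠ a ∧ e ≠ b ∧ e ≠ c := by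
  classical
  obtain ⟨e, he, hne⟩ := Finset.exists_mem_notMem_of_card_lt_card
    (s := {a, b, c}) (t := Finset.univ.map f)
    (by simpa using Finset.card_le_three.trans_lt (by norm_num))
  obtain ⟨i, -, rfl⟩ := Finset.mem_map.1 he
  simp only [Finset.mem_insert, Finset.mem_singleton, not_or] at hne
  exact ⟨f i, hf i, hne⟩

namespace IsCMP

variable {G : SimpleGraph V} {F : Set V} {P : Set (Set V)} {C D : Set V} {u w : V}

theorem subset (hP : IsCMP G F P) (hC : C ∈ P) : C ⊆ F := (hP.1 C hC).2

theorem exists_mem (hP : IsCMP G F P) (hu : u ∈ F) : ∃ C ∈ P, u ∈ C := by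
  rwa [← hP.2.1] at hu

theorem eq_of_mem (hP : IsCMP G F P) (hC : C ∈ P) (hD : D ∈ P) (huC : u ∈ C) (huD : u ∈ D) :
    C = D := by
  by_contra hne
  exact (hP.2.2.1 C hC D hD hne).ne_of_mem huC huD rfl

theorem adj_iff_ne (hP : IsCMP G F P) (hC : C ∈ P) (hD : D ∈ P) (hu : u ∈ C) (hw : w ∈ D) :
    G.Adj u w ↔ C ≠ D := by
  rw [hP.2.2.2 u (hP.subset hC hu) w (hP.subset hD hw)]
  refine ⟨fun h hCD => h ⟨C, hC, hu, hCD ▸ hw⟩, fun hCD ⟨E, hE, huE, hwE⟩ => hCD ?_⟩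
  exact (hP.eq_of_mem hC hE hu huE).trans (hP.eq_of_mem hE hD hwE hw)

theorem adj (hP : IsCMP G F P) (hC : C ∈ P) (hD : D ∈ P) (hCD : C ≠ D) (hu : u ∈ C)
    (hw : w ∈ D) : G.Adj u w :=
  (hP.adj_iff_ne hC hD hu hw).2 hCD

theorem not_adj (hP : IsCMP G F P) (hC : C ∈ P) (hu : u ∈ C) (hw : w ∈ C) : ¬ G.Adj u w :=
  fun h => (hP.adj_iff_ne hC hC hu hw).1 h rfl

theorem mem_of_not_adj (hP : IsCMP G F P) (hC : C ∈ P) (hu : u ∈ C) (hw : w ∈ F)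
    (huw : ¬ G.Adj u w) : w ∈ C := by
  obtain ⟨D, hD, hwD⟩ := hP.exists_mem hw
  rwa [← not_not.1 (mt (hP.adj_iff_ne hC hD hu hwD).2 huw)] at hwD

theorem nonAdj_trans (hP : IsCMP G F P) :
    ∀ u ∈ F, ∀ w ∈ F, ∀ x ∈ F, ¬ G.Adj u w → ¬ G.Adj w x → ¬ G.Adj u x := by
  intro u hu w hw x hx huw hwx
  obtain ⟨C, hC, huC⟩ := hP.exists_mem hu
  obtain ⟨D, hD, hwD⟩ := hP.exists_mem hw
  obtain ⟨E, hE, hxE⟩ := hP.exists_mem hx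
  rw [hP.adj_iff_ne hC hD huC hwD, not_not] at huw
  rw [hP.adj_iff_ne hD hE hwD hxE, not_not] at hwx
  rw [hP.adj_iff_ne hC hE huC hxE, not_not]
  exact huw.trans hwx

theorem exists_pairwise_adj (hP : IsCMP G F P) {p : ℕ} (f : Fin p ↪ Set V)
    (hf : ∀ i, f i ∈ P) :
    ∃ k : Fin p → V, (∀ i, k i ∈ F) ∧ Pairwise fun i j => G.Adj (k i) (k j) := by
  choose k hk using fun i => (hP.1 _ (hf i)).1
  exact ⟨k, fun i => hP.subset (hf i) (hk i),
    fun i j hij => (hP.adj_iff_ne (hf i) (hf j) (hk i) (hk j)).2 (f.injective.ne hij)⟩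

theorem not_prisonFree_of_classes (hP : IsCMP G F P) {A B C D : Set V}
    (hA : A ∈ P) (hB : B ∈ P) (hC : C ∈ P) (hD : D ∈ P) (hAB : A ≠ B) (hAC : A ≠ C)
    (hAD : A ≠ D) (hBC : B ≠ C) (hBD : B ≠ D) (hCD : C ≠ D) {a b c d v : V}
    (ha : a ∈ A) (hb : b ∈ B) (hc : c ∈ C) (hd : d ∈ D)
    (hva : G.Adj v a) (hvb : G.Adj v b) (hvc : ¬ G.Adj v c) (hvd : ¬ G.Adj v d) :
    ¬ PrisonFree G :=
  not_prisonFree_of_adj (hP.adj hA hB hAB ha hb) (hP.adj hA hC hAC ha hc)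
    (hP.adj hA hD hAD ha hd) (hP.adj hB hC hBC hb hc) (hP.adj hB hD hBD hb hd)
    (hP.adj hC hD hCD hc hd) hva hvb hvc hvd

variable {v : V}

-- A class is *mixed* for `v` if it holds both a neighbour and a non-neighbour of `v`.
theorem not_adj_of_mixed_class (hG : PrisonFree G) (hP : IsCMP G F P)
    (h4 : ∀ A B C : Set V, ∃ E ∈ P, E ≠ A ∧ E ≠ B ∧ E ≠ C) {E : Set V}
    (hC : C ∈ P) (hD : D ∈ P) (hE : E ∈ P) (hDC : D ≠ C) (hEC : E ≠ C) (hED : E ≠ D)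
    {x z y p : V} (hx : x ∈ C) (hz : z ∈ C) (hy : y ∈ D) (hp : p ∈ E)
    (hvx : G.Adj v x) (hvz : ¬ G.Adj v z) (hvy : G.Adj v y) : ¬ G.Adj v p := by
  intro hvp
  obtain ⟨E', hE', hE'C, hE'D, hE'E⟩ := h4 C D E
  obtain ⟨q, hq⟩ := (hP.1 E' hE').1
  by_cases hvq : G.Adj v q
  · -- `v` joins `p, q, x` in a 4-clique that `z` sees only at `p` and `q`
    exact not_prisonFree_of_adj (hP.adj hE hE' hE'E.symm hp hq) hvp.symm
      (hP.adj hE hC hEC hp hx) hvq.symm (hP.adj hE' hC hE'C hq hx) hvx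
      (hP.adj hC hE hEC.symm hz hp) (hP.adj hC hE' hE'C.symm hz hq)
      (fun h => hvz h.symm) (hP.not_adj hC hz hx) hG
  · exact hP.not_prisonFree_of_classes hD hE hC hE' hED.symm hDC hE'D.symm hEC hE'E.symm
      hE'C.symm hy hp hz hq hvy hvp hvz hvq hG

theorem false_of_mixed_class (hG : PrisonFree G) (hP : IsCMP G F P)
    (h4 : ∀ A B C : Set V, ∃ E ∈ P, E ≠ A ∧ E ≠ B ∧ E ≠ C)
    (hC : C ∈ P) (hD : D ∈ P) (hDC : D ≠ C) {x z y : V}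
    (hx : x ∈ C) (hz : z ∈ C) (hy : y ∈ D)
    (hvx : G.Adj v x) (hvz : ¬ G.Adj v z) (hvy : G.Adj v y) : False := by
  obtain ⟨E, hE, hEC, hED, -⟩ := h4 C D D
  obtain ⟨E', hE', hE'C, hE'D, hE'E⟩ := h4 C D E
  obtain ⟨p, hp⟩ := (hP.1 E hE).1
  obtain ⟨q, hq⟩ := (hP.1 E' hE').1
  exact hP.not_prisonFree_of_classes hC hD hE hE' hDC.symm hEC.symm hE'C.symm hED.symm
    hE'D.symm hE'E.symm hx hy hp hq hvx hvy
    (hP.not_adj_of_mixed_class hG h4 hC hD hE hDC hEC hED hx hz hy hp hvx hvz hvy)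
    (hP.not_adj_of_mixed_class hG h4 hC hD hE' hDC hE'C hE'D hx hz hy hq hvx hvz hvy) hG

theorem not_adj_of_not_adj (hG : PrisonFree G) (hP : IsCMP G F P)
    (h4 : ∀ A B C : Set V, ∃ E ∈ P, E ≠ A ∧ E ≠ B ∧ E ≠ C) {x y z : V}
    (hx : x ∈ F) (hy : y ∈ F) (hz : z ∈ F) (hw : w ∈ F) (hxy : G.Adj x y)
    (hvx : G.Adj v x) (hvy : G.Adj v y) (hvz : ¬ G.Adj v z) (hzw : ¬ G.Adj z w) :
    ¬ G.Adj v w := by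
  intro hvw
  obtain ⟨C, hC, hzC⟩ := hP.exists_mem hz
  have hwC := hP.mem_of_not_adj hC hzC hw hzw
  obtain ⟨A, hA, hxA⟩ := hP.exists_mem hx
  obtain ⟨B, hB, hyB⟩ := hP.exists_mem hy
  have hAB := (hP.adj_iff_ne hA hB hxA hyB).1 hxy
  rcases eq_or_ne A C with rfl | hAC
  · exact hP.false_of_mixed_class hG h4 hA hB hAB.symm hwC hzC hyB hvw hvz hvy
  · exact hP.false_of_mixed_class hG h4 hC hA hAC hwC hzC hxA hvw hvz hvx

end IsCMP

section
variable {G : SimpleGraph V} {F : Set V} {v : V}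

theorem nonAdj_trans_insert (hG : PrisonFree G)
    (htrans : ∀ u ∈ F, ∀ w ∈ F, ∀ t ∈ F, ¬ G.Adj u w → ¬ G.Adj w t → ¬ G.Adj u t)
    {x y : V} (hx : x ∈ F) (hy : y ∈ F) (hxy : G.Adj x y) (hvx : G.Adj v x) (hvy : G.Adj v y)
    (hclosed : ∀ z ∈ F, ∀ w ∈ F, ¬ G.Adj v z → ¬ G.Adj z w → ¬ G.Adj v w) :
    ∀ u ∈ insert v F, ∀ w ∈ insert v F, ∀ t ∈ insert v F,
      ¬ G.Adj u w → ¬ G.Adj w t → ¬ G.Adj u t := by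
  have hsees : ∀ a ∈ F, G.Adj v a → ∀ b ∈ F, ¬ G.Adj v b → G.Adj a b := by
    intro a ha hva b hb hvb
    by_contra hab
    exact hclosed b hb a ha hvb (by rwa [G.adj_comm]) hva
  have hnon : ∀ z ∈ F, ∀ w ∈ F, ¬ G.Adj v z → ¬ G.Adj v w → ¬ G.Adj z w := by
    intro z hz w hw hvz hvw hzw
    exact not_prisonFree_of_adj hxy (hsees x hx hvx z hz hvz) (hsees x hx hvx w hw hvw)
      (hsees y hy hvy z hz hvz) (hsees y hy hvy w hw hvw) hzw hvx hvy hvz hvw hG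
  intro u hu w hw t ht huw hwt
  rcases hu with rfl | hu <;> rcases hw with rfl | hw <;> rcases ht with rfl | ht
  all_goals first
    | assumption
    | exact G.irrefl
    | exact htrans u hu w hw t ht huw hwt
    | exact hclosed w hw t ht huw hwt
    | exact hnon u hu t ht (by rwa [G.adj_comm]) hwt
    | exact fun h => hclosed w hw u hu (by rwa [G.adj_comm]) (by rwa [G.adj_comm]) h.symm

theorem PrisonFree.meetsAtMostOneClass (hG : PrisonFree G) {W : Set V} (hF : Cmd G W 4 F)
    (hvW : v ∈ W) (hv : v ∉ F) {P : Set (Set V)} (hP : IsCMP G F P) :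
    MeetsAtMostOneClass G P v := by
  rintro C hC D hD ⟨x, hxC, hvx⟩ ⟨y, hyD, hvy⟩
  by_contra hCD
  obtain ⟨hFW, ⟨Q, hQ, f, hf⟩, hmax⟩ := hF
  have hx := hP.subset hC hxC
  have hy := hP.subset hD hyD
  have hxy := hP.adj hC hD hCD hxC hyD
  have htrans := nonAdj_trans_insert hG hQ.nonAdj_trans hx hy hxy hvx hvy fun z hz w hw =>
    hQ.not_adj_of_not_adj hG (exists_mem_ne_of_embedding f hf) hx hy hz hw hxy hvx hvy
  obtain ⟨k, hkF, hk⟩ := hQ.exists_pairwise_adj f hf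
  have hext : CMPAtLeast G (insert v F) 4 :=
    cmpAtLeast_of_nonAdj_trans htrans k (fun i => Set.mem_insert_of_mem v (hkF i)) hk
  exact hv (hmax _ (Set.insert_subset hvW hFW) (Set.subset_insert v F) hext ▸ Set.mem_insert v F)

theorem prisonFree_of_forall_cmd [Finite V]
    (h : ∀ F : Set V, Cmd G Set.univ 4 F → ∀ v ∉ F, ∀ P : Set (Set V),
      IsCMP G F P → MeetsAtMostOneClass G P v) :
    PrisonFree G := by
  rintro ⟨-, f, -, hf⟩
  have adj (i j : Fin 5) (hij : prison.Adj i j := by decide) : G.Adj (f i) (f j) :=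
    (hf i j).2 hij
  have hK : ∀ i j : Fin 4, i ≠ j → G.Adj (f i.castSucc) (f j.castSucc) := fun i j hij =>
    adj _ _ (by revert i j; decide)
  set K := Set.range fun i : Fin 4 => f i.castSucc
  have hKtrans :
      ∀ u ∈ K, ∀ w ∈ K, ∀ t ∈ K, ¬ G.Adj u w → ¬ G.Adj w t → ¬ G.Adj u t := by
    rintro _ ⟨i, rfl⟩ _ ⟨j, rfl⟩ _ ⟨l, rfl⟩ hij hjl
    obtain rfl : i = j := not_not.1 fun hne => hij (hK i j hne)
    exact hjl
  obtain ⟨F, hKF, hF⟩ := exists_cmd_superset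
    (cmpAtLeast_of_nonAdj_trans hKtrans _ (fun i => ⟨i, rfl⟩) hK) (Set.subset_univ _)
  have hmem (i : Fin 4) : f i.castSucc ∈ F := hKF ⟨i, rfl⟩
  obtain ⟨P, hP, -⟩ := hF.2.1
  by_cases h4 : f 4 ∈ F
  · exact hP.nonAdj_trans _ (hmem 2) _ h4 _ (hmem 3)
      (fun h => ((hf 4 2).1 h.symm).2 (by decide)) (fun h => ((hf 4 3).1 h).2 (by decide))
      (adj 2 3)
  · obtain ⟨C, hC, h0⟩ := hP.exists_mem (hmem 0)
    obtain ⟨D, hD, h1⟩ := hP.exists_mem (hmem 1)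
    have hCD := h F hF (f 4) h4 P hP C hC D hD ⟨_, h0, adj 4 0⟩ ⟨_, h1, adj 4 1⟩
    exact hP.not_adj hD (hCD ▸ h0) h1 (adj 0 1)

end

/-- A graph `G` is prison-free iff for every inclusion-wise maximal
set `F` such that `G[F]` is complete multipartite with at least 4 classes and every
vertex `v ∉ F`, the neighbourhood of `v` intersects at most one class of `F`. -/
theorem prisonFree_iff_cmd4_structure {V : Type*} [Fintype V] (G : SimpleGraph V) :
    PrisonFree G ↔
      ∀ F : Set V, Cmd G Set.univ 4 F → ∀ v ∉ F, ∀ P : Set (Set V),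
        IsCMP G F P → MeetsAtMostOneClass G P v :=
  ⟨fun hG _ hF _ hv _ hP => hG.meetsAtMostOneClass hF (Set.mem_univ _) hv hP,
    prisonFree_of_forall_cmd⟩

end PrisonFreePaper
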